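/- arXiv:2405.19023 — 2 statements merged into one kernel-verified Lean document; each statement's English description precedes it below -/
import Mathlib

section
/- Let A be an Artin algebra and (I, J) an ideal torsion pair in mod A. If the regular module A admits a left I-approximation φ : A → C_A, then I is covariantly finite: every module M admits a left I-approximation, which can be constructed as the pushout of φ^n along an epimorphism A^n → M. -/
open CategoryTheory

universe u

variable (k : Type u) [CommRing k] [IsArtinianRing k]
variable (A : Type u) [Ring A] [Algebra k A] [Module.Finite k A]

/-- A class of morphisms of `mod A`, the category of finitely generated `A`-modules. -/
abbrev MorClass := ∀ (M N : FGModuleCat A), Set (M ⟶ N)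

/-- An ideal of `mod A`: a class of morphisms closed under addition of parallel morphisms
and under composition with arbitrary morphisms on either side. -/
def IsMorIdeal (I : MorClass A) : Prop :=
  (∀ {M N : FGModuleCat A} {f g : M ⟶ N}, f ∈ I M N → g ∈ I M N → f + g ∈ I M N) ∧
  (∀ {M N P : FGModuleCat A} (f : M ⟶ N) {g : N ⟶ P}, g ∈ I N P → f ≫ g ∈ I M P) ∧
  (∀ {M N P : FGModuleCat A} {f : M ⟶ N} (g : N ⟶ P), f ∈ I M N → f ≫ g ∈ I M P)

/-- `I^⊥`: all morphisms `ψ` with `ψ ∘ φ = 0` for every `φ ∈ I`. -/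
def rightPerp (I : MorClass A) : MorClass A :=
  fun N P => {ψ | ∀ (M : FGModuleCat A) (φ : M ⟶ N), φ ∈ I M N → φ ≫ ψ = 0}

/-- `⊥J`: all morphisms `φ` with `ψ ∘ φ = 0` for every `ψ ∈ J`. -/
def leftPerp (J : MorClass A) : MorClass A :=
  fun M N => {φ | ∀ (P : FGModuleCat A) (ψ : N ⟶ P), ψ ∈ J N P → φ ≫ ψ = 0}

/-- `(I, J)` is an ideal torsion pair. -/
def IsIdealTorsionPair (I J : MorClass A) : Prop :=
  IsMorIdeal A I ∧ IsMorIdeal A J ∧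
  (∀ {M N P : FGModuleCat A} (φ : M ⟶ N) (ψ : N ⟶ P), φ ∈ I M N → ψ ∈ J N P → φ ≫ ψ = 0) ∧
  (∀ M : FGModuleCat A, ∃ (L N : FGModuleCat A) (φ : L ⟶ M) (ψ : M ⟶ N),
    φ ∈ I L M ∧ ψ ∈ J M N ∧ Function.Injective φ ∧ Function.Surjective ψ ∧
    LinearMap.range (ConcreteCategory.hom (C := FGModuleCat A) φ) =
      LinearMap.ker (ConcreteCategory.hom (C := FGModuleCat A) ψ))

/-- `φ : M → C` is a left `I`-approximation of `M`: it lies in `I` and every morphism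
in `I` starting at `M` factors through it. -/
def IsLeftApprox (I : MorClass A) {M C : FGModuleCat A} (φ : M ⟶ C) : Prop :=
  φ ∈ I M C ∧ ∀ (X : FGModuleCat A) (f : M ⟶ X), f ∈ I M X → ∃ g : C ⟶ X, φ ≫ g = f

/-- `ψ : C → N` is a right `I`-approximation of `N`: it lies in `I` and every morphism
in `I` ending at `N` factors through it. -/
def IsRightApprox (I : MorClass A) {C N : FGModuleCat A} (ψ : C ⟶ N) : Prop :=
  ψ ∈ I C N ∧ ∀ (X : FGModuleCat A) (f : X ⟶ N), f ∈ I X N → ∃ g : X ⟶ C, g ≫ ψ = f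

/-- Evaluation of a finite sum of morphisms of `mod A`. -/
theorem aux_sum_apply {ι : Type} {M N : FGModuleCat A} (s : Finset ι) (f : ι → (M ⟶ N))
    (x : M) : (∑ i ∈ s, f i) x = ∑ i ∈ s, f i x := by
  induction s using Finset.cons_induction with
  | empty => rfl
  | cons a s ha ih => rw [Finset.sum_cons, Finset.sum_cons, ← ih]; rfl

/-- An ideal containing some morphism contains all zero morphisms. -/
theorem aux_zero_mem (I : MorClass A) (hI : IsMorIdeal A I)
    {M₀ N₀ : FGModuleCat A} (φ₀ : M₀ ⟶ N₀) (hφ₀ : φ₀ ∈ I M₀ N₀)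
    (M N : FGModuleCat A) : (0 : M ⟶ N) ∈ I M N := by
  have h1 : (0 : M ⟶ M₀) ≫ φ₀ ∈ I M N₀ := hI.2.1 _ hφ₀
  have h2 := hI.2.2 (0 : N₀ ⟶ N) h1
  simpa using h2

/-- For an ideal torsion pair, `⊥J ⊆ I`. -/
theorem aux_mem_of_perp (I J : MorClass A) (h : IsIdealTorsionPair A I J)
    {M N : FGModuleCat A} (χ : M ⟶ N)
    (hχ : ∀ (P : FGModuleCat A) (ψ : N ⟶ P), ψ ∈ J N P → χ ≫ ψ = 0) :
    χ ∈ I M N := by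
  obtain ⟨hI, hJ, hcomp, hseq⟩ := h
  obtain ⟨L, N', α, β, hα, hβ, hinj, hsurj, hrange⟩ := hseq N
  have hχβ : χ ≫ β = 0 := hχ _ β hβ
  have hfac : ∀ m : M, χ m ∈ LinearMap.range (ConcreteCategory.hom (C := FGModuleCat A) α) := by
    intro m
    rw [hrange]
    have h1 : (χ ≫ β) m = (0 : M ⟶ N') m := by rw [hχβ]
    exact h1
  let e := LinearEquiv.ofInjective (ConcreteCategory.hom (C := FGModuleCat A) α) hinj
  let χ' : M ⟶ L := ConcreteCategory.ofHom (C := FGModuleCat A) (e.symm.toLinearMap ∘ₗ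
    LinearMap.codRestrict _ (ConcreteCategory.hom (C := FGModuleCat A) χ) hfac)
  have hfact : χ' ≫ α = χ := by
    apply FGModuleCat.hom_ext; apply LinearMap.ext; intro m
    show α (e.symm ⟨χ m, hfac m⟩) = χ m
    exact congrArg Subtype.val (e.apply_symm_apply ⟨χ m, hfac m⟩)
  rw [← hfact]
  exact hI.2.1 χ' hα

/-- The componentwise extension of a morphism in an ideal lies in the ideal. -/
theorem aux_pi_mem (I : MorClass A) (hI : IsMorIdeal A I)
    {C : FGModuleCat A} (φ : FGModuleCat.of A A ⟶ C) (hφ : φ ∈ I _ C) (n : ℕ)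
    (Φ : FGModuleCat.of A (Fin n → A) ⟶ FGModuleCat.of A (Fin n → C))
    (hΦ : ∀ (v : Fin n → A) (i : Fin n), Φ v i = φ (v i)) :
    Φ ∈ I (FGModuleCat.of A (Fin n → A)) (FGModuleCat.of A (Fin n → C)) := by
  let p : ∀ _ : Fin n, (FGModuleCat.of A (Fin n → A) ⟶ FGModuleCat.of A A) :=
    fun i => ConcreteCategory.ofHom (C := FGModuleCat A) (LinearMap.proj i : (Fin n → A) →ₗ[A] A)
  let s : ∀ _ : Fin n, ((C : FGModuleCat A) ⟶ FGModuleCat.of A (Fin n → C)) :=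
    fun i => ConcreteCategory.ofHom (C := FGModuleCat A) (LinearMap.single A (fun _ : Fin n => (C : Type u)) i)
  have hdecomp : Φ = ∑ i : Fin n, p i ≫ φ ≫ s i := by
    apply FGModuleCat.hom_ext; apply LinearMap.ext; intro v
    show Φ v = (∑ i : Fin n, p i ≫ φ ≫ s i) v
    rw [aux_sum_apply]
    have h2 : (∑ i : Fin n, (p i ≫ φ ≫ s i) v) = ∑ i : Fin n, Pi.single i (φ (v i)) :=
      Finset.sum_congr rfl fun i _ => rfl
    have h1 : Φ v = fun j => φ (v j) := funext (hΦ v)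
    rw [h1, h2]
    exact (Finset.univ_sum_single (fun j => φ (v j))).symm
  rw [hdecomp]
  apply Finset.sum_induction _ (fun x => x ∈ I _ _)
  · intro a b ha hb; exact hI.1 ha hb
  · exact aux_zero_mem A I hI φ hφ _ _
  · intro i _
    exact hI.2.1 _ (hI.2.2 _ hφ)

/-- If the regular module `A` admits a left `I`-approximation `φ : A → C`, then `I` is
covariantly finite: every module `M` admits a left `I`-approximation, and such an
approximation is obtained as the pushout of `φ^n` along any epimorphism `A^n → M`. -/
theorem covariantlyFinite_of_leftApprox_regular (I J : MorClass A)
    (h : IsIdealTorsionPair A I J) (C : FGModuleCat A)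
    (φ : FGModuleCat.of A A ⟶ C) (hφ : IsLeftApprox A I φ) :
    (∀ M : FGModuleCat A, ∃ (C' : FGModuleCat A) (ψ : M ⟶ C'), IsLeftApprox A I ψ) ∧
    (∀ (M : FGModuleCat A) (n : ℕ) (π : FGModuleCat.of A (Fin n → A) ⟶ M),
      Function.Surjective π →
      ∀ (Φ : FGModuleCat.of A (Fin n → A) ⟶ FGModuleCat.of A (Fin n → C)),
        (∀ (v : Fin n → A) (i : Fin n), Φ v i = φ (v i)) →
      ∀ (P : FGModuleCat A) (ψ : M ⟶ P) (ρ : FGModuleCat.of A (Fin n → C) ⟶ P),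
        π ≫ ψ = Φ ≫ ρ →
        (∀ (Q : FGModuleCat A) (u : M ⟶ Q) (v : FGModuleCat.of A (Fin n → C) ⟶ Q),
          π ≫ u = Φ ≫ v → ∃! w : P ⟶ Q, ψ ≫ w = u ∧ ρ ≫ w = v) →
        IsLeftApprox A I ψ) := by
  have hI : IsMorIdeal A I := h.1
  have hJ : IsMorIdeal A J := h.2.1
  have hcomp : ∀ {M N P : FGModuleCat A} (φ' : M ⟶ N) (ψ' : N ⟶ P),
      φ' ∈ I M N → ψ' ∈ J N P → φ' ≫ ψ' = 0 := h.2.2.1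
  have part2 : ∀ (M : FGModuleCat A) (n : ℕ) (π : FGModuleCat.of A (Fin n → A) ⟶ M),
      Function.Surjective π →
      ∀ (Φ : FGModuleCat.of A (Fin n → A) ⟶ FGModuleCat.of A (Fin n → C)),
        (∀ (v : Fin n → A) (i : Fin n), Φ v i = φ (v i)) →
      ∀ (P : FGModuleCat A) (ψ : M ⟶ P) (ρ : FGModuleCat.of A (Fin n → C) ⟶ P),
        π ≫ ψ = Φ ≫ ρ →
        (∀ (Q : FGModuleCat A) (u : M ⟶ Q) (v : FGModuleCat.of A (Fin n → C) ⟶ Q),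
          π ≫ u = Φ ≫ v → ∃! w : P ⟶ Q, ψ ≫ w = u ∧ ρ ≫ w = v) →
        IsLeftApprox A I ψ := by
    intro M n π hπ Φ hΦ P ψ ρ hsq hpush
    have hΦI : Φ ∈ I _ _ := aux_pi_mem A I hI φ hφ.1 n Φ hΦ
    constructor
    · -- ψ ∈ I, via ⊥J ⊆ I
      apply aux_mem_of_perp A I J h
      intro Q w hw
      have h0 : Φ ≫ (ρ ≫ w) = 0 := hcomp Φ (ρ ≫ w) hΦI (hJ.2.1 ρ hw)
      have h1 : π ≫ (ψ ≫ w) = 0 := by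
        rw [← Category.assoc, hsq, Category.assoc, h0]
      apply FGModuleCat.hom_ext; apply LinearMap.ext; intro m
      obtain ⟨x, rfl⟩ := hπ m
      have h2 : (π ≫ (ψ ≫ w)) x = (0 : FGModuleCat.of A (Fin n → A) ⟶ Q) x := by rw [h1]
      exact h2
    · -- factorization through the pushout
      intro X f hf
      have hfac : ∀ i : Fin n, ∃ g : C ⟶ X,
          φ ≫ g = (ConcreteCategory.ofHom (C := FGModuleCat A) (LinearMap.single A (fun _ : Fin n => A) i) :
            FGModuleCat.of A A ⟶ FGModuleCat.of A (Fin n → A)) ≫ π ≫ f :=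
        fun i => hφ.2 X _ (hI.2.1 _ (hI.2.1 _ hf))
      choose g hg using hfac
      have hG : π ≫ f = Φ ≫ ∑ i : Fin n,
          (ConcreteCategory.ofHom (C := FGModuleCat A) (LinearMap.proj i : (Fin n → (C : Type u)) →ₗ[A] C) :
            FGModuleCat.of A (Fin n → C) ⟶ C) ≫ g i := by
        apply FGModuleCat.hom_ext; apply LinearMap.ext; intro v
        show f (π v) = (∑ i : Fin n,
          (ConcreteCategory.ofHom (C := FGModuleCat A) (LinearMap.proj i : (Fin n → (C : Type u)) →ₗ[A] C) :
            FGModuleCat.of A (Fin n → C) ⟶ C) ≫ g i) (Φ v)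
        rw [aux_sum_apply]
        have h4 : ∀ i : Fin n,
            ((ConcreteCategory.ofHom (C := FGModuleCat A) (LinearMap.proj i : (Fin n → (C : Type u)) →ₗ[A] C) :
              FGModuleCat.of A (Fin n → C) ⟶ C) ≫ g i) (Φ v)
            = f (π (Pi.single i (v i))) := by
          intro i
          have h5 := congrArg (fun (t : FGModuleCat.of A A ⟶ X) => t (v i)) (hg i)
          calc ((ConcreteCategory.ofHom (C := FGModuleCat A) (LinearMap.proj i : (Fin n → (C : Type u)) →ₗ[A] C) :
                FGModuleCat.of A (Fin n → C) ⟶ C) ≫ g i) (Φ v)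
              = g i ((Φ v) i) := rfl
            _ = g i (φ (v i)) := by rw [hΦ v i]
            _ = f (π (Pi.single i (v i))) := h5
        rw [Finset.sum_congr rfl fun i _ => h4 i]
        have h6 : (∑ i : Fin n, f (π (Pi.single i (v i))))
            = f (π (∑ i : Fin n, Pi.single i (v i))) := by
          rw [map_sum, map_sum]
        rw [h6, Finset.univ_sum_single v]
      obtain ⟨w, ⟨hw1, _⟩, _⟩ := hpush X f _ hG
      exact ⟨w, hw1⟩
  refine ⟨?_, part2⟩
  intro M
  obtain ⟨n, π0, hπ0⟩ := Module.Finite.exists_fin' A M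
  let π : FGModuleCat.of A (Fin n → A) ⟶ M := ConcreteCategory.ofHom (C := FGModuleCat A) π0
  let Φl : (Fin n → A) →ₗ[A] (Fin n → (C : Type u)) :=
    LinearMap.pi fun i => (ConcreteCategory.hom (C := FGModuleCat A) φ) ∘ₗ LinearMap.proj i
  let Φ : FGModuleCat.of A (Fin n → A) ⟶ FGModuleCat.of A (Fin n → C) := ConcreteCategory.ofHom (C := FGModuleCat A) Φl
  have hΦ : ∀ (v : Fin n → A) (i : Fin n), Φ v i = φ (v i) := fun v i => rfl
  let δ : (Fin n → A) →ₗ[A] ↥M × (Fin n → ↥C) :=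
    (LinearMap.inl A _ _ ∘ₗ π0) - (LinearMap.inr A _ _ ∘ₗ Φl)
  let K := LinearMap.range δ
  let P : FGModuleCat A := FGModuleCat.of A (_ ⧸ K)
  let ψ : M ⟶ P := ConcreteCategory.ofHom (C := FGModuleCat A) (K.mkQ ∘ₗ LinearMap.inl A _ _)
  let ρ : FGModuleCat.of A (Fin n → C) ⟶ P := ConcreteCategory.ofHom (C := FGModuleCat A) (K.mkQ ∘ₗ LinearMap.inr A _ _)
  have hsq : π ≫ ψ = Φ ≫ ρ := by
    apply FGModuleCat.hom_ext; apply LinearMap.ext; intro x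
    show Submodule.Quotient.mk (π0 x, 0) = Submodule.Quotient.mk (0, Φl x)
    rw [Submodule.Quotient.eq]
    exact ⟨x, rfl⟩
  have hpush : ∀ (Q : FGModuleCat A) (u : M ⟶ Q) (v : FGModuleCat.of A (Fin n → C) ⟶ Q),
      π ≫ u = Φ ≫ v → ∃! w : P ⟶ Q, ψ ≫ w = u ∧ ρ ≫ w = v := by
    intro Q u v huv
    have hker : K ≤ LinearMap.ker
        (LinearMap.coprod (ConcreteCategory.hom (C := FGModuleCat A) u)
          (ConcreteCategory.hom (C := FGModuleCat A) v)) := by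
      rintro _ ⟨x, rfl⟩
      rw [LinearMap.mem_ker]
      have h1 : u (π0 x) = v (Φl x) := congrArg (fun (t : _ ⟶ Q) => t x) huv
      show LinearMap.coprod (ConcreteCategory.hom (C := FGModuleCat A) u)
        (ConcreteCategory.hom (C := FGModuleCat A) v) (δ x) = 0
      have h2 : δ x = ((π0 x, 0) : ↥M × (Fin n → ↥C)) - (0, Φl x) := rfl
      rw [h2, map_sub]
      simp [LinearMap.coprod_apply, h1]
    let w : P ⟶ Q := ConcreteCategory.ofHom (C := FGModuleCat A) (K.liftQ (LinearMap.coprod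
      (ConcreteCategory.hom (C := FGModuleCat A) u) (ConcreteCategory.hom (C := FGModuleCat A) v)) hker)
    have key : ∀ (w' : P ⟶ Q), ψ ≫ w' = u → ρ ≫ w' = v →
        (ConcreteCategory.hom (C := FGModuleCat A) w').comp K.mkQ = LinearMap.coprod
          (ConcreteCategory.hom (C := FGModuleCat A) u) (ConcreteCategory.hom (C := FGModuleCat A) v) := by
      intro w' hw1 hw2
      apply LinearMap.ext; rintro ⟨m, c⟩
      have e0 : ((m, c) : ↥M × (Fin n → ↥C)) = (m, 0) + (0, c) := by
        simp
      have e1 : w' (K.mkQ (m, 0)) = u m := congrArg (fun (t : M ⟶ Q) => t m) hw1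
      have e2 : w' (K.mkQ (0, c)) = v c := congrArg (fun (t : _ ⟶ Q) => t c) hw2
      show w' (K.mkQ (m, c)) = u m + v c
      rw [e0, map_add, map_add, e1, e2]
    have hw : ψ ≫ w = u ∧ ρ ≫ w = v := by
      constructor
      · apply FGModuleCat.hom_ext; apply LinearMap.ext; intro m
        show LinearMap.coprod (ConcreteCategory.hom (C := FGModuleCat A) u)
          (ConcreteCategory.hom (C := FGModuleCat A) v) ((m : (M : Type u)), 0) = u m
        simp
      · apply FGModuleCat.hom_ext; apply LinearMap.ext; intro c
        show LinearMap.coprod (ConcreteCategory.hom (C := FGModuleCat A) u)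
          (ConcreteCategory.hom (C := FGModuleCat A) v) ((0 : (M : Type u)), c) = v c
        simp
    refine ⟨w, hw, ?_⟩
    intro y hy
    exact FGModuleCat.hom_ext <| Submodule.linearMap_qext _ ((key y hy.1 hy.2).trans (key w hw.1 hw.2).symm)
  exact ⟨P, ψ, part2 M n π hπ0 Φ hΦ P ψ ρ hsq hpush⟩
end

section
/- Let A be an Artin algebra and I a torsion ideal of mod A. Then the class ob I of all modules M with identity 1_M ∈ I is an epi-closed class: it is closed under direct summands, finite direct sums, and factor modules. -/
open CategoryTheory

universe u

variable (k : Type u) [CommRing k] [IsArtinianRing k]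
variable (A : Type u) [Ring A] [Algebra k A] [Module.Finite k A]

/-- `⟨C⟩`: the ideal of all morphisms factoring through an object of the class `C`. -/
def factorClass (C : Set (FGModuleCat A)) : MorClass A :=
  fun M N => {φ | ∃ X : FGModuleCat A, X ∈ C ∧ ∃ (g : M ⟶ X) (h : X ⟶ N), g ≫ h = φ}

/-- `ob I`: the class of modules whose identity morphism belongs to `I`. -/
def obClass (I : MorClass A) : Set (FGModuleCat A) := {M | 𝟙 M ∈ I M M}

/-- `I` is a torsion ideal. -/
def IsTorsionIdeal (I : MorClass A) : Prop :=
  IsMorIdeal A I ∧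
  ∀ (L M N : FGModuleCat A) (f : L ⟶ M) (φ : M ⟶ N),
    Function.Surjective f → f ≫ φ ∈ I L N → φ ∈ I M N

/-- For a torsion ideal `I`, the class `ob I = {M : 1_M ∈ I}` is an epi-closed class:
it is closed under direct summands, finite direct sums, and factor modules. -/
theorem obClass_epiClosed_of_torsionIdeal (I : MorClass A) (hI : IsTorsionIdeal A I) :
    (∀ (M N : FGModuleCat A), M ∈ obClass A I →
      ∀ (r : M ⟶ N) (s : N ⟶ M), s ≫ r = 𝟙 N → N ∈ obClass A I) ∧
    (∀ M N : FGModuleCat A, M ∈ obClass A I → N ∈ obClass A I →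
      ∀ (P : FGModuleCat A) (p₁ : P ⟶ M) (p₂ : P ⟶ N) (i₁ : M ⟶ P) (i₂ : N ⟶ P),
        i₁ ≫ p₁ = 𝟙 M → i₂ ≫ p₂ = 𝟙 N → p₁ ≫ i₁ + p₂ ≫ i₂ = 𝟙 P → P ∈ obClass A I) ∧
    (∀ M ∈ obClass A I, ∀ (N : FGModuleCat A) (p : M ⟶ N),
      Function.Surjective p → N ∈ obClass A I) := by
  obtain ⟨⟨hadd, hleft, hright⟩, htor⟩ := hI
  refine ⟨?_, ?_, ?_⟩
  · intro M N hM r s hsr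
    have h1 : r ∈ I M N := hright r hM
    have h2 : s ≫ r ∈ I N N := hleft s h1
    rwa [hsr] at h2
  · intro M N hM hN P p₁ p₂ i₁ i₂ _ _ hsum
    have h1 : p₁ ≫ i₁ ∈ I P P := hleft p₁ (hright i₁ hM)
    have h2 : p₂ ≫ i₂ ∈ I P P := hleft p₂ (hright i₂ hN)
    have := hadd h1 h2
    rwa [hsum] at this
  · intro M hM N p hp
    have h1 : p ∈ I M N := hright p hM
    have h2 : p ≫ 𝟙 N ∈ I M N := by simpa using h1
    exact htor M N N p (𝟙 N) hp h2
end
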